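/- A PBZ*-lattice L is orthomodular (i.e., satisfies x′ ≈ x~) if and only if T(L) = {x ∈ L : x~ ∈ {0,1}} equals {0, 1}. -/
import Mathlib


open scoped Classical

/-- A bounded involution lattice (BI-lattice): a bounded lattice with an
order-reversing involution. -/
class BILattice (α : Type*) extends Lattice α, BoundedOrder α where
  inv : α → α
  inv_anti : ∀ a b : α, a ≤ b → inv b ≤ inv a
  inv_inv : ∀ a : α, inv (inv a) = a

open BILattice

/-- A pseudo-Kleene algebra. -/
class PseudoKleene (α : Type*) extends BILattice α where
  kleene : ∀ a b : α, a ⊓ inv a ≤ b ⊔ inv b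

/-- A Brouwer–Zadeh lattice. -/
class BZLattice (α : Type*) extends PseudoKleene α where
  brou : α → α
  brou_anti : ∀ a b : α, a ≤ b → brou b ≤ brou a
  brou_inf : ∀ a : α, a ⊓ brou a = ⊥
  le_brou_brou : ∀ a : α, a ≤ brou (brou a)
  brou_brou : ∀ a : α, brou (brou a) = inv (brou a)

open BZLattice

/-- A PBZ*-lattice: a paraorthomodular BZ-lattice satisfying condition (∗). -/
class PBZLattice (α : Type*) extends BZLattice α where
  paraortho : ∀ a b : α, a ≤ b → inv a ⊓ b = ⊥ → a = b
  star : ∀ a : α, brou (a ⊓ inv a) = brou a ⊔ brou (inv a)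

/-- An antiortholattice: a PBZ*-lattice whose only sharp elements are ⊥ and ⊤. -/
class Antiortholattice (α : Type*) extends PBZLattice α where
  sharp_trivial : ∀ a : α, a ⊔ inv a = ⊤ → a = ⊥ ∨ a = ⊤

section Aux
open BILattice BZLattice
variable {α : Type*} [PBZLattice α]

lemma my_inv_bot : inv (⊥ : α) = ⊤ := by
  apply le_antisymm le_top
  calc (⊤ : α) = inv (inv ⊤) := (BILattice.inv_inv ⊤).symm
    _ ≤ inv ⊥ := inv_anti _ _ bot_le

lemma my_inv_top : inv (⊤ : α) = ⊥ := by
  rw [← my_inv_bot, BILattice.inv_inv]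

lemma my_brou_le_inv (a : α) : brou a ≤ inv a := by
  have h := inv_anti _ _ (le_brou_brou a)
  rwa [brou_brou, BILattice.inv_inv] at h

lemma my_inv_sup (a b : α) : inv (a ⊔ b) = inv a ⊓ inv b := by
  apply le_antisymm
  · exact le_inf (inv_anti _ _ le_sup_left) (inv_anti _ _ le_sup_right)
  · have h : a ⊔ b ≤ inv (inv a ⊓ inv b) := by
      apply sup_le
      · have := inv_anti _ _ (inf_le_left (a := inv a) (b := inv b))
        rwa [BILattice.inv_inv] at this
      · have := inv_anti _ _ (inf_le_right (a := inv a) (b := inv b))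
        rwa [BILattice.inv_inv] at this
    have := inv_anti _ _ h
    rwa [BILattice.inv_inv] at this

end Aux

open BILattice BZLattice in
/-- A PBZ*-lattice is orthomodular (satisfies x′ ≈ x~) iff
`T(L) = {x : x~ ∈ {⊥, ⊤}}` equals `{⊥, ⊤}`. -/
theorem pbz_orthomodular_iff_T_trivial {L : Type*} [PBZLattice L] :
    (∀ x : L, inv x = brou x) ↔
      ({x : L | brou x = ⊥ ∨ brou x = ⊤} = {⊥, ⊤}) := by
  constructor
  · intro h
    ext x
    simp only [Set.mem_setOf_eq, Set.mem_insert_iff, Set.mem_singleton_iff]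
    constructor
    · rintro (hx | hx)
      · right
        rw [← h] at hx
        rw [← BILattice.inv_inv x, hx, my_inv_bot]
      · left
        have := brou_inf x
        rw [hx, inf_top_eq] at this
        exact this
    · rintro (rfl | rfl)
      · right
        rw [← h, my_inv_bot]
      · left
        rw [← h, my_inv_top]
  · intro h x
    have hT : ∀ y : L, brou y = ⊥ ∨ brou y = ⊤ → y = ⊥ ∨ y = ⊤ := by
      intro y hy
      have : y ∈ ({x : L | brou x = ⊥ ∨ brou x = ⊤}) := hy
      rw [h] at this
      simpa using this
    set y := x ⊔ brou x with hy
    have hby : brou y = ⊥ := by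
      apply le_antisymm _ bot_le
      have h1 : brou y ≤ brou x := brou_anti _ _ le_sup_left
      have h2 : brou y ≤ brou (brou x) := brou_anti _ _ le_sup_right
      calc brou y ≤ brou x ⊓ brou (brou x) := le_inf h1 h2
        _ = ⊥ := brou_inf (brou x)
    rcases hT y (Or.inl hby) with hyb | hyt
    · have htb : (⊤ : L) ≤ ⊥ := by
        have h1 : brou x ≤ (⊥ : L) := hyb ▸ le_sup_right
        have h2 : x ≤ (⊥ : L) := hyb ▸ le_sup_left
        have hx : x = ⊥ := le_antisymm h2 bot_le
        have hb : brou (⊥ : L) = ⊤ := by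
          apply le_antisymm le_top
          calc (⊤ : L) ≤ brou (brou ⊤) := le_brou_brou ⊤
            _ ≤ brou ⊥ := brou_anti _ _ bot_le
        rw [hx, hb] at h1
        exact h1
      exact le_antisymm (le_trans le_top (le_trans htb bot_le))
        (le_trans le_top (le_trans htb bot_le))
    · have hmeet : inv (brou x) ⊓ inv x = ⊥ := by
        rw [← my_inv_sup, sup_comm, ← hy, hyt, my_inv_top]
      exact (PBZLattice.paraortho (brou x) (inv x) (my_brou_le_inv x) hmeet).symm
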